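/- arXiv:1801.01384 — 5 statements merged into one kernel-verified Lean document; each statement's English description precedes it below -/
import Mathlib

section
/- Let (L,·,\,/) be a loop with A(L)-holomorph (H,∘). Then (H,∘) is a middle Bol loop if and only if (xδ)·((y·(zδ))\x) = ((x/z)δ)·(y\x) for all x,y,z∈L and all δ∈A(L). -/
/-- A loop `(L, ·, \, /)` with identity `e`: `mul` is the multiplication,
`ld` the left division (`ld x y = x \ y`), `rd` the right division (`rd x y = x / y`). -/
structure LoopStr (α : Type*) where
  mul : α → α → α
  ld : α → α → α
  rd : α → α → α
  e : α
  mul_ld : ∀ x y, mul x (ld x y) = y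
  rd_mul : ∀ x y, mul (rd y x) x = y
  ld_mul : ∀ x y, ld x (mul x y) = y
  mul_rd : ∀ x y, rd (mul y x) x = y
  e_mul : ∀ x, mul e x = x
  mul_e : ∀ x, mul x e = x

namespace LoopStr

variable {α : Type*}

/-- The middle Bol identity `x(yz \ x) = (x/z)(y \ x)`. -/
def IsMiddleBol (Q : LoopStr α) : Prop :=
  ∀ x y z, Q.mul x (Q.ld (Q.mul y z) x) = Q.mul (Q.rd x z) (Q.ld y x)

/-- The subgroup `A` of permutations of `L` consists of automorphisms of `(L,·)`,
i.e. `A ≤ AUT(L,·)`. -/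
def IsAutSubgroup (Q : LoopStr α) (A : Subgroup (Equiv.Perm α)) : Prop :=
  ∀ θ ∈ A, ∀ x y, θ (Q.mul x y) = Q.mul (θ x) (θ y)

/-- Holomorph multiplication `(α,x)∘(β,y) = (αβ, xβ·y)`.  Maps are written on the
right and composed left to right, so `αβ` ("first `α`, then `β`") is `β * α`
in Mathlib's convention, and `xβ` is `β x`. -/
def hmul (Q : LoopStr α) (A : Subgroup (Equiv.Perm α)) (p q : A × α) : A × α :=
  (q.1 * p.1, Q.mul ((q.1 : Equiv.Perm α) p.2) q.2)

end LoopStr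

/-!
Write `p = (a, u)`, `q = (b, v)`, `r = (c, w)` in the holomorph and put `δ = a * (c * b)⁻¹`,
`y = (a * b⁻¹) v`. Solving for the divisions of the holomorph and using that `δ` is an
automorphism, both sides of the middle Bol identity at `(p, q, r)` have first component `δ * a`,
and their second components are exactly the two sides of `(uδ)·((y·(wδ))\u) = ((u/w)δ)·(y\u)`.
Since `(δ, y)` ranges over all of `A × L` as `(a, b, c, v)` does, the two conditions coincide.
-/

namespace LoopStr

variable {α : Type*}

theorem ld_eq_of_mul_eq (Q : LoopStr α) {x y z : α} (h : Q.mul x z = y) : Q.ld x y = z := by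
  rw [← h, Q.ld_mul]

theorem rd_eq_of_mul_eq (Q : LoopStr α) {x y z : α} (h : Q.mul z x = y) : Q.rd y x = z := by
  rw [← h, Q.mul_rd]

theorem IsAutSubgroup.smul_mul {Q : LoopStr α} {A : Subgroup (Equiv.Perm α)}
    (hA : Q.IsAutSubgroup A) (g : A) (x y : α) : g • Q.mul x y = Q.mul (g • x) (g • y) :=
  hA g g.2 x y

section Holomorph

variable (Q : LoopStr α) {A : Subgroup (Equiv.Perm α)} {H : LoopStr (A × α)}

theorem ld_of_mul_eq_hmul (hH : ∀ p q, H.mul p q = Q.hmul A p q) (p q : A × α) :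
    H.ld p q = (q.1 * p.1⁻¹, Q.ld ((q.1 * p.1⁻¹) • p.2) q.2) :=
  H.ld_eq_of_mul_eq <| by simp [hH, hmul, Subgroup.smul_def, Equiv.Perm.smul_def, Q.mul_ld]

theorem rd_of_mul_eq_hmul (hH : ∀ p q, H.mul p q = Q.hmul A p q) (p q : A × α) :
    H.rd q p = (p.1⁻¹ * q.1, p.1⁻¹ • Q.rd q.2 p.2) :=
  H.rd_eq_of_mul_eq <| by simp [hH, hmul, Subgroup.smul_def, Equiv.Perm.smul_def, Q.rd_mul]

variable (hH : ∀ p q, H.mul p q = Q.hmul A p q)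
include hH

theorem mul_ld_mul_of_mul_eq_hmul (hA : Q.IsAutSubgroup A) (a b c : A) (u v w : α) :
    H.mul (a, u) (H.ld (H.mul (b, v) (c, w)) (a, u)) =
      (a * (c * b)⁻¹ * a,
        Q.mul ((a * (c * b)⁻¹) • u)
          (Q.ld (Q.mul ((a * b⁻¹) • v) ((a * (c * b)⁻¹) • w)) u)) := by
  have hδ : (a * (c * b)⁻¹) • Q.mul (c • v) w =
      Q.mul ((a * b⁻¹) • v) ((a * (c * b)⁻¹) • w) := by
    rw [hA.smul_mul, ← mul_smul]
    group
  simp only [hH, hmul, Q.ld_of_mul_eq_hmul hH, ← Subgroup.smul_def, ← Equiv.Perm.smul_def, hδ]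

theorem rd_mul_ld_of_mul_eq_hmul (a b c : A) (u v w : α) :
    H.mul (H.rd (a, u) (c, w)) (H.ld (b, v) (a, u)) =
      (a * (c * b)⁻¹ * a,
        Q.mul ((a * (c * b)⁻¹) • Q.rd u w) (Q.ld ((a * b⁻¹) • v) u)) := by
  simp only [hH, hmul, Q.ld_of_mul_eq_hmul hH, Q.rd_of_mul_eq_hmul hH, Prod.ext_iff]
  constructor
  · group
  · simp [Subgroup.smul_def, Equiv.Perm.smul_def, mul_smul]

end Holomorph

end LoopStr

/-- Let `(L,·,\,/)` be a loop with `A(L)`-holomorph `(H,∘)`.  Then `(H,∘)`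
is a middle Bol loop if and only if
`(xδ)·((y·(zδ))\x) = ((x/z)δ)·(y\x)` for all `x,y,z ∈ L` and all `δ ∈ A(L)`.
(The holomorph is a loop; we quantify over the (unique) loop structure `H` whose
multiplication is the holomorph multiplication.) -/
theorem holomorph_middleBol_iff {α : Type*} (Q : LoopStr α) (A : Subgroup (Equiv.Perm α))
    (hA : Q.IsAutSubgroup A) :
    ∀ H : LoopStr (A × α), (∀ p q, H.mul p q = Q.hmul A p q) →
      (H.IsMiddleBol ↔
        ∀ δ ∈ A, ∀ x y z : α,
          Q.mul (δ x) (Q.ld (Q.mul y (δ z)) x) = Q.mul (δ (Q.rd x z)) (Q.ld y x)) := by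
  intro H hH
  constructor
  · intro hB δ hδ x y z
    have key := hB (⟨δ, hδ⟩, x) (1, δ⁻¹ y) (1, z)
    rw [Q.mul_ld_mul_of_mul_eq_hmul hH hA, Q.rd_mul_ld_of_mul_eq_hmul hH, Prod.ext_iff] at key
    simpa [Subgroup.smul_def, Equiv.Perm.smul_def] using key.2
  · rintro h ⟨a, u⟩ ⟨b, v⟩ ⟨c, w⟩
    rw [Q.mul_ld_mul_of_mul_eq_hmul hH hA, Q.rd_mul_ld_of_mul_eq_hmul hH]
    simpa [Subgroup.smul_def, Equiv.Perm.smul_def] using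
      h _ (a * (c * b)⁻¹).2 u ((a * b⁻¹) • v) w
end

section
/- Let (L,·,\,/) be a loop with A(L)-holomorph (H,∘). Then (H,∘) is a commutative loop if and only if A(L) is an abelian group and, for all α,β∈A(L), the triple ⟨β,α⁻¹,I⟩ is an anti-autotopism of (L,·), i.e., (xβ)·(yα⁻¹) = y·x for all x,y∈L. -/
/-- An anti-autotopism of `(L,·)`: a triple `⟨U,V,W⟩` of bijections of `L` such that
`xU · yV = (y·x)W` for all `x,y ∈ L`. -/
def LoopStr.IsAntiATP {α : Type*} (Q : LoopStr α) (U V W : α → α) : Prop :=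
  Function.Bijective U ∧ Function.Bijective V ∧ Function.Bijective W ∧
    ∀ x y, Q.mul (U x) (V y) = W (Q.mul y x)

namespace LoopStr

variable {α : Type*} (Q : LoopStr α)

theorem isAntiATP_perm_id_iff (U V : Equiv.Perm α) :
    Q.IsAntiATP U V id ↔ ∀ x y, Q.mul (U x) (V y) = Q.mul y x :=
  ⟨fun h => h.2.2.2, fun h => ⟨U.bijective, V.bijective, Function.bijective_id, h⟩⟩

theorem hmul_comm_iff (A : Subgroup (Equiv.Perm α)) :
    (∀ p q : A × α, Q.hmul A p q = Q.hmul A q p) ↔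
      ((∀ a ∈ A, ∀ b ∈ A, a * b = b * a) ∧
        ∀ a ∈ A, ∀ b ∈ A, ∀ x y, Q.mul (b x) y = Q.mul (a y) x) := by
  simp only [hmul, Prod.ext_iff, Subtype.ext_iff, Prod.forall, Subtype.forall]
  exact ⟨fun h => ⟨fun a ha b hb => (h a ha Q.e b hb Q.e).1.symm,
      fun a ha b hb x y => (h a ha x b hb y).2⟩,
    fun h a ha x b hb y => ⟨h.1 b hb a ha, h.2 a ha b hb x y⟩⟩

end LoopStr

theorem holomorph_commutative_iff_general {α : Type*} (Q : LoopStr α)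
    (A : Subgroup (Equiv.Perm α)) :
    (∀ p q : A × α, Q.hmul A p q = Q.hmul A q p) ↔
      ((∀ a ∈ A, ∀ b ∈ A, a * b = b * a) ∧
        ∀ a ∈ A, ∀ b ∈ A,
          Q.IsAntiATP (fun x => b x) (fun y => a⁻¹ y) id) := by
  rw [Q.hmul_comm_iff A]
  refine and_congr_right fun _ => forall₄_congr fun a _ b _ => ?_
  rw [Q.isAntiATP_perm_id_iff b a⁻¹]
  refine forall_congr' fun x => (a⁻¹).surjective.forall.trans (forall_congr' fun y => ?_)
  rw [← Equiv.Perm.mul_apply, mul_inv_cancel, Equiv.Perm.one_apply]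

/-- Let `(L,·,\,/)` be a loop with `A(L)`-holomorph `(H,∘)`.  Then `(H,∘)`
is a commutative loop if and only if `A(L)` is an abelian group and, for all
`α,β ∈ A(L)`, the triple `⟨β, α⁻¹, I⟩` is an anti-autotopism of `(L,·)`, i.e.
`(xβ)·(yα⁻¹) = y·x` for all `x,y ∈ L`. -/
theorem holomorph_commutative_iff {α : Type*} (Q : LoopStr α)
    (A : Subgroup (Equiv.Perm α)) (hA : Q.IsAutSubgroup A) :
    (∀ p q : A × α, Q.hmul A p q = Q.hmul A q p) ↔
      ((∀ a ∈ A, ∀ b ∈ A, a * b = b * a) ∧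
        ∀ a ∈ A, ∀ b ∈ A,
          Q.IsAntiATP (fun x => b x) (fun y => a⁻¹ y) id) :=
  holomorph_commutative_iff_general Q A
end

section
/- Let (Q,·,\,/) be a right Bol loop with identity e, x∗y = (y·(x·y⁻¹))·y where y⁻¹ := y\e, A(Q) ≤ AUT(Q,·), (H,⊙) the A(Q)-holomorph of (Q,·) and (H,⊛) the A(Q)-holomorph of (Q,∗). Let (ℋ,(∗,·)) be the right combined holomorph. Then (ℋ,(∗,·)) = (H,⊛) (i.e., (α,x)(∗,·)(β,y) = (α,x)⊛(β,y) for all α,β∈A(Q), x,y∈Q) if and only if αβ = βα for all α,β∈A(Q) and, for all α,β∈A(Q) and all x,y∈Q, β = R_y⁻¹L_{yα}L_y⁻¹R_y, i.e., y·((xβ)/y) = (yα)·(x/y). -/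
/-- Right Bol identity `((x·y)·z)·y = x·((y·z)·y)`. -/
def LoopStr.IsRightBol {α : Type*} (Q : LoopStr α) : Prop :=
  ∀ x y z, Q.mul (Q.mul (Q.mul x y) z) y = Q.mul x (Q.mul (Q.mul y z) y)

/-- The operation `x∗y = (y·(x·y⁻¹))·y` (with `y⁻¹ := y\e`) corresponding to a
right Bol loop `(Q,·)`; `(Q,∗)` is its corresponding middle Bol loop. -/
def LoopStr.starR {α : Type*} (Q : LoopStr α) (x y : α) : α :=
  Q.mul (Q.mul y (Q.mul x (Q.ld y Q.e))) y

/-- The `A(Q)`-holomorph multiplication `(α,x)⊛(β,y) = (αβ, (xβ)∗y)` of `(Q,∗)`. -/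
def LoopStr.hstarR {α : Type*} (Q : LoopStr α) (A : Subgroup (Equiv.Perm α))
    (p q : A × α) : A × α :=
  (q.1 * p.1, Q.starR ((q.1 : Equiv.Perm α) p.2) q.2)

/-- The inverse in the holomorph `(H,⊙)` of a right Bol loop:
`(β,y)⁻¹ = (β⁻¹, (y⁻¹)β⁻¹)` with `y⁻¹ := y\e`. -/
def LoopStr.hinvR {α : Type*} (Q : LoopStr α) (A : Subgroup (Equiv.Perm α))
    (p : A × α) : A × α :=
  (p.1⁻¹, ((p.1 : Equiv.Perm α))⁻¹ (Q.ld p.2 Q.e))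

/-- The right combined holomorph operation
`(α,x)(∗,·)(β,y) = ((β,y)⊙((α,x)⊙(β,y)⁻¹))⊙(β,y)`. -/
def LoopStr.rightComb {α : Type*} (Q : LoopStr α) (A : Subgroup (Equiv.Perm α))
    (p q : A × α) : A × α :=
  Q.hmul A (Q.hmul A q (Q.hmul A p (Q.hinvR A q))) q

/-!
Since `β` is an automorphism, the right combined product unfolds to
`(α,x)(∗,·)(β,y) = (αβ, ((yα)·(x·y⁻¹))·y)`, while `(α,x)⊛(β,y) = (βα, (y·((xβ)·y⁻¹))·y)`.
The first components agree iff `α` and `β` commute; the second ones, after cancelling `y`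
on the right, iff `(yα)·(x·y⁻¹) = y·((xβ)·y⁻¹)`. A right Bol loop has the right inverse
property `(x·y)·y⁻¹ = x`, so `u/y = u·y⁻¹`, which turns this into the stated identity.
-/

namespace LoopStr

variable {α : Type*}

theorem mul_right_cancel (Q : LoopStr α) {x y z : α} (h : Q.mul x z = Q.mul y z) : x = y := by
  rw [← Q.mul_rd z x, h, Q.mul_rd]

theorem mul_left_inj (Q : LoopStr α) (z : α) {x y : α} : Q.mul x z = Q.mul y z ↔ x = y :=
  ⟨Q.mul_right_cancel, congrArg (Q.mul · z)⟩

variable {Q : LoopStr α}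

theorem IsRightBol.mul_mul_inv (hRB : Q.IsRightBol) (x y : α) :
    Q.mul (Q.mul x y) (Q.ld y Q.e) = x :=
  Q.mul_right_cancel (by rw [hRB, Q.mul_ld, Q.e_mul])

theorem IsRightBol.rd_eq_mul_inv (hRB : Q.IsRightBol) (x y : α) :
    Q.rd x y = Q.mul x (Q.ld y Q.e) := by
  simpa only [Q.rd_mul] using (hRB.mul_mul_inv (Q.rd x y) y).symm

theorem rightComb_mk {A : Subgroup (Equiv.Perm α)} (hA : Q.IsAutSubgroup A)
    (a b : A) (x y : α) :
    Q.rightComb A (a, x) (b, y) =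
      (a * b, Q.mul (Q.mul ((a : Equiv.Perm α) y) (Q.mul x (Q.ld y Q.e))) y) := by
  refine Prod.ext ?_ ?_
  · simp only [rightComb, hmul, hinvR]
    group
  · simp only [rightComb, hmul, hinvR, Subgroup.coe_mul, Subgroup.coe_inv, Equiv.Perm.mul_apply,
      hA (b : Equiv.Perm α) b.2, Equiv.Perm.coe_inv, Equiv.apply_symm_apply]

theorem rightComb_mk_eq_hstarR_mk_iff (hRB : Q.IsRightBol) {A : Subgroup (Equiv.Perm α)}
    (hA : Q.IsAutSubgroup A) (a b : A) (x y : α) :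
    Q.rightComb A (a, x) (b, y) = Q.hstarR A (a, x) (b, y) ↔
      a * b = b * a ∧
        Q.mul y (Q.rd ((b : Equiv.Perm α) x) y) = Q.mul ((a : Equiv.Perm α) y) (Q.rd x y) := by
  simp only [rightComb_mk hA, hstarR, starR, Prod.mk.injEq]
  rw [Q.mul_left_inj, hRB.rd_eq_mul_inv, hRB.rd_eq_mul_inv, eq_comm (a := Q.mul y _)]

end LoopStr

/-- Let `(Q,·,\,/)` be a right Bol loop, `x∗y = (y·(x·y⁻¹))·y` with
`y⁻¹ := y\e`, `A(Q) ≤ AUT(Q,·)`, `(H,⊙)` the `A(Q)`-holomorph of `(Q,·)`, `(H,⊛)` the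
`A(Q)`-holomorph of `(Q,∗)` and `(ℋ,(∗,·))` the right combined holomorph.  Then
`(ℋ,(∗,·)) = (H,⊛)` if and only if `αβ = βα` for all `α,β ∈ A(Q)` and, for all
`α,β ∈ A(Q)` and all `x,y ∈ Q`, `β = R_y⁻¹L_{yα}L_y⁻¹R_y`, i.e.
`y·((xβ)/y) = (yα)·(x/y)`. -/
theorem rightCombinedHolomorph_eq_iff {α : Type*} (Q : LoopStr α)
    (hRB : Q.IsRightBol)
    (A : Subgroup (Equiv.Perm α)) (hA : Q.IsAutSubgroup A) :
    (∀ p q : A × α, Q.rightComb A p q = Q.hstarR A p q) ↔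
      ((∀ a ∈ A, ∀ b ∈ A, a * b = b * a) ∧
        ∀ a ∈ A, ∀ b ∈ A, ∀ x y : α,
          Q.mul y (Q.rd (b x) y) = Q.mul (a y) (Q.rd x y)) := by
  have key := LoopStr.rightComb_mk_eq_hstarR_mk_iff hRB hA
  constructor
  · intro h
    exact ⟨fun a ha b hb => congrArg Subtype.val ((key ⟨a, ha⟩ ⟨b, hb⟩ Q.e Q.e).1 (h _ _)).1,
      fun a ha b hb x y => ((key ⟨a, ha⟩ ⟨b, hb⟩ x y).1 (h _ _)).2⟩
  · rintro ⟨hcomm, hsides⟩ ⟨a, x⟩ ⟨b, y⟩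
    exact (key a b x y).2 ⟨Subtype.ext (hcomm a a.2 b b.2), hsides a a.2 b b.2 x y⟩
end

section
/- Let (Q,·,\,/) be a left Bol loop with identity e, let x∗y = y·((y⁻¹·x)·y) where y⁻¹ := e/y, and let A(Q) ≤ AUT(Q,·). Let (H,⊙) be the A(Q)-holomorph of (Q,·), i.e., (α,x)⊙(β,y) = (αβ, xβ·y), and let (H,⊛) be the A(Q)-holomorph of (Q,∗), i.e., (α,x)⊛(β,y) = (αβ, (xβ)∗y). Then the operations ⊙ and ⊛ coincide (i.e., (α,x)⊙(β,y) = (α,x)⊛(β,y) for all α,β∈A(Q), x,y∈Q) if and only if (Q,·) is flexible, i.e., (y·a)·y = y·(a·y) for all a,y∈Q. -/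
/-- Left Bol identity `(x·(y·x))·z = x·(y·(x·z))`. -/
def LoopStr.IsLeftBol {α : Type*} (Q : LoopStr α) : Prop :=
  ∀ x y z, Q.mul (Q.mul x (Q.mul y x)) z = Q.mul x (Q.mul y (Q.mul x z))

/-- The operation `x∗y = y·((y⁻¹·x)·y)` (with `y⁻¹ := e/y`) corresponding to a
left Bol loop `(Q,·)`; `(Q,∗)` is its corresponding middle Bol loop. -/
def LoopStr.starL {α : Type*} (Q : LoopStr α) (x y : α) : α :=
  Q.mul y (Q.mul (Q.mul (Q.rd Q.e y) x) y)

/-- The `A(Q)`-holomorph multiplication `(α,x)⊛(β,y) = (αβ, (xβ)∗y)` of `(Q,∗)`. -/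
def LoopStr.hstarL {α : Type*} (Q : LoopStr α) (A : Subgroup (Equiv.Perm α))
    (p q : A × α) : A × α :=
  (q.1 * p.1, Q.starL ((q.1 : Equiv.Perm α) p.2) q.2)

/-!
A left Bol loop has the left inverse property `y⁻¹·(y·z) = z` (take `x = y`, `y = y⁻¹` in the
Bol identity). Hence `(y·a)∗y = y·(a·y)`, so `∗ = ·` forces flexibility; conversely, flexibility
turns `x∗y = y·((y⁻¹·x)·y)` into `(y·(y⁻¹·x))·y = x·y`. The two holomorph multiplications agree
iff `∗ = ·`, as one sees on pairs whose automorphism is the identity.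
-/

namespace LoopStr

variable {α : Type*} (Q : LoopStr α)

theorem mul_left_cancel {x y z : α} (h : Q.mul x y = Q.mul x z) : y = z := by
  rw [← Q.ld_mul x y, h, Q.ld_mul]

theorem hmul_eq_hstarL_iff (A : Subgroup (Equiv.Perm α)) :
    (∀ p q : A × α, Q.hmul A p q = Q.hstarL A p q) ↔ ∀ x y, Q.starL x y = Q.mul x y := by
  constructor
  · intro h x y
    exact (congrArg Prod.snd (h (1, x) (1, y))).symm
  · intro h p q
    exact Prod.ext rfl (h _ _).symm

namespace IsLeftBol

variable {Q}

theorem inv_mul_cancel_left (hLB : Q.IsLeftBol) (y z : α) :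
    Q.mul (Q.rd Q.e y) (Q.mul y z) = z := by
  have hBol := hLB y (Q.rd Q.e y) z
  rw [Q.rd_mul, Q.mul_e] at hBol
  exact Q.mul_left_cancel hBol.symm

theorem mul_inv (hLB : Q.IsLeftBol) (y : α) : Q.mul y (Q.rd Q.e y) = Q.e := by
  refine Q.mul_left_cancel (x := Q.rd Q.e y) ?_
  rw [hLB.inv_mul_cancel_left, Q.mul_e]

theorem inv_inv (hLB : Q.IsLeftBol) (y : α) : Q.rd Q.e (Q.rd Q.e y) = y := by
  simpa only [hLB.mul_inv] using Q.mul_rd (Q.rd Q.e y) y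

theorem mul_inv_cancel_left (hLB : Q.IsLeftBol) (y x : α) :
    Q.mul y (Q.mul (Q.rd Q.e y) x) = x := by
  simpa only [hLB.inv_inv] using hLB.inv_mul_cancel_left (Q.rd Q.e y) x

theorem starL_mul_left (hLB : Q.IsLeftBol) (y a : α) :
    Q.starL (Q.mul y a) y = Q.mul y (Q.mul a y) := by
  rw [starL, hLB.inv_mul_cancel_left]

theorem starL_eq_mul_iff_flexible (hLB : Q.IsLeftBol) :
    (∀ x y, Q.starL x y = Q.mul x y) ↔ ∀ a y, Q.mul (Q.mul y a) y = Q.mul y (Q.mul a y) := by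
  constructor
  · intro h a y
    rw [← h, hLB.starL_mul_left]
  · intro hflex x y
    rw [starL, ← hflex, hLB.mul_inv_cancel_left]

end IsLeftBol

end LoopStr

theorem leftBol_holomorphs_coincide_iff_flexible_general {α : Type*} (Q : LoopStr α)
    (hLB : Q.IsLeftBol)
    (A : Subgroup (Equiv.Perm α)) :
    (∀ p q : A × α, Q.hmul A p q = Q.hstarL A p q) ↔
      (∀ a y, Q.mul (Q.mul y a) y = Q.mul y (Q.mul a y)) :=
  (Q.hmul_eq_hstarL_iff A).trans hLB.starL_eq_mul_iff_flexible

/-- Let `(Q,·,\,/)` be a left Bol loop, `x∗y = y·((y⁻¹·x)·y)` with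
`y⁻¹ := e/y`, and `A(Q) ≤ AUT(Q,·)`.  Let `(H,⊙)` be the `A(Q)`-holomorph of `(Q,·)`
and `(H,⊛)` the `A(Q)`-holomorph of `(Q,∗)`.  Then `⊙` and `⊛` coincide if and only if
`(Q,·)` is flexible, i.e. `(y·a)·y = y·(a·y)` for all `a,y ∈ Q`. -/
theorem leftBol_holomorphs_coincide_iff_flexible {α : Type*} (Q : LoopStr α)
    (hLB : Q.IsLeftBol)
    (A : Subgroup (Equiv.Perm α)) (hA : Q.IsAutSubgroup A) :
    (∀ p q : A × α, Q.hmul A p q = Q.hstarL A p q) ↔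
      (∀ a y, Q.mul (Q.mul y a) y = Q.mul y (Q.mul a y)) :=
  leftBol_holomorphs_coincide_iff_flexible_general Q hLB A
end

section
/- Let (Q,·,\,/) be a left Bol loop with identity e, x∗y = y·((y⁻¹·x)·y) where y⁻¹ := e/y, A(Q) ≤ AUT(Q,·), (H,⊙) the A(Q)-holomorph of (Q,·) and (H,⊛) the A(Q)-holomorph of (Q,∗). Let (ℋ,[∗,·]) be the left combined holomorph. Then (ℋ,[∗,·]) = (H,⊛) (i.e., (α,x)[∗,·](β,y) = (α,x)⊛(β,y) for all α,β∈A(Q), x,y∈Q) if and only if L_y⁻¹R_yL_y = L_{yφ}⁻¹R_yL_{yφ} for all y∈Q and all φ∈A(Q), i.e., y·((y\a)·y) = (yφ)·(((yφ)\a)·y) for all a,y∈Q and φ∈A(Q). -/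
/-- The inverse in the holomorph `(H,⊙)` of a left Bol loop:
`(β,y)⁻¹ = (β⁻¹, (y⁻¹)β⁻¹)` with `y⁻¹ := e/y`. -/
def LoopStr.hinvL {α : Type*} (Q : LoopStr α) (A : Subgroup (Equiv.Perm α))
    (p : A × α) : A × α :=
  (p.1⁻¹, ((p.1 : Equiv.Perm α))⁻¹ (Q.rd Q.e p.2))

/-- The left combined holomorph operation
`(α,x)[∗,·](β,y) = (β,y)⊙(((β,y)⁻¹⊙(α,x))⊙(β,y))`. -/
def LoopStr.leftComb {α : Type*} (Q : LoopStr α) (A : Subgroup (Equiv.Perm α))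
    (p q : A × α) : A × α :=
  Q.hmul A q (Q.hmul A (Q.hmul A (Q.hinvL A q) p) q)

/-! In a left Bol loop `y \ z = y⁻¹ · z`, and automorphisms commute with `/` and fix `e`.
Hence both `(α,x)[∗,·](β,y)` and `(α,x)⊛(β,y)` have first coordinate `αβ`, and their second
coordinates are `(xβ) L_{yθ}⁻¹ R_y L_{yθ}` and `(xβ) L_y⁻¹ R_y L_y` for `θ = β⁻¹αβ`.
Taking `β = 1` lets `θ` run through all of `A(Q)`, and `xβ` runs through all of `Q`. -/

namespace LoopStr

variable {α : Type*} {Q : LoopStr α}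

/-- `Q.conjR u y a` is `a L_u⁻¹ R_y L_u`, with maps written on the right. -/
def conjR (Q : LoopStr α) (u y a : α) : α :=
  Q.mul u (Q.mul (Q.ld u a) y)

theorem ld_self (Q : LoopStr α) (x : α) : Q.ld x x = Q.e := by
  simpa only [Q.mul_e] using Q.ld_mul x Q.e

theorem IsLeftBol.rd_e_mul_mul (hLB : Q.IsLeftBol) (x z : α) :
    Q.mul (Q.rd Q.e x) (Q.mul x z) = z := by
  have h := congrArg (Q.ld x) (hLB x (Q.rd Q.e x) z)
  rwa [Q.rd_mul, Q.mul_e, Q.ld_mul, Q.ld_mul, eq_comm] at h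

theorem IsLeftBol.ld_eq (hLB : Q.IsLeftBol) (x z : α) :
    Q.ld x z = Q.mul (Q.rd Q.e x) z := by
  simpa only [Q.mul_ld] using (hLB.rd_e_mul_mul x (Q.ld x z)).symm

theorem IsAutSubgroup.map_e {A : Subgroup (Equiv.Perm α)} (hA : Q.IsAutSubgroup A)
    {θ : Equiv.Perm α} (hθ : θ ∈ A) : θ Q.e = Q.e := by
  have h := congrArg (Q.ld (θ Q.e)) (hA θ hθ Q.e Q.e)
  rwa [Q.mul_e, Q.ld_mul, Q.ld_self, eq_comm] at h

theorem IsAutSubgroup.map_rd {A : Subgroup (Equiv.Perm α)} (hA : Q.IsAutSubgroup A)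
    {θ : Equiv.Perm α} (hθ : θ ∈ A) (x y : α) : θ (Q.rd x y) = Q.rd (θ x) (θ y) := by
  calc θ (Q.rd x y) = Q.rd (Q.mul (θ (Q.rd x y)) (θ y)) (θ y) := (Q.mul_rd _ _).symm
    _ = Q.rd (θ x) (θ y) := by rw [← hA θ hθ, Q.rd_mul]

theorem hstarL_eq (hLB : Q.IsLeftBol) (A : Subgroup (Equiv.Perm α)) (p q : A × α) :
    Q.hstarL A p q = (q.1 * p.1, Q.conjR q.2 q.2 ((q.1 : Equiv.Perm α) p.2)) := by
  simp only [hstarL, starL, conjR, hLB.ld_eq]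

theorem leftComb_eq (hLB : Q.IsLeftBol) {A : Subgroup (Equiv.Perm α)} (hA : Q.IsAutSubgroup A)
    (p q : A × α) :
    Q.leftComb A p q = (q.1 * p.1,
      Q.conjR (((q.1 * p.1 * q.1⁻¹ : A) : Equiv.Perm α) q.2) q.2 ((q.1 : Equiv.Perm α) p.2)) := by
  obtain ⟨φ, x⟩ := p
  obtain ⟨β, y⟩ := q
  set θ : A := β * φ * β⁻¹
  have hθ : ∀ z, (β : Equiv.Perm α) ((φ : Equiv.Perm α) ((β : Equiv.Perm α)⁻¹ z)) =
      (θ : Equiv.Perm α) z := fun _ => rfl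
  have hθe : (θ : Equiv.Perm α) (Q.rd Q.e y) = Q.rd Q.e ((θ : Equiv.Perm α) y) := by
    rw [hA.map_rd θ.2, hA.map_e θ.2]
  simp only [leftComb, hmul, hinvL, conjR, hLB.ld_eq]
  ext
  · group
  · rw [hA _ β.2, hθ, hθe, ← mul_assoc]

end LoopStr

/-- Let `(Q,·,\,/)` be a left Bol loop, `x∗y = y·((y⁻¹·x)·y)` with
`y⁻¹ := e/y`, `A(Q) ≤ AUT(Q,·)`, `(H,⊙)` the `A(Q)`-holomorph of `(Q,·)`, `(H,⊛)` the
`A(Q)`-holomorph of `(Q,∗)` and `(ℋ,[∗,·])` the left combined holomorph.  Then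
`(ℋ,[∗,·]) = (H,⊛)` if and only if `L_y⁻¹R_yL_y = L_{yφ}⁻¹R_yL_{yφ}` for all `y ∈ Q`
and `φ ∈ A(Q)`, i.e. `y·((y\a)·y) = (yφ)·(((yφ)\a)·y)` for all `a,y ∈ Q` and
`φ ∈ A(Q)`. -/
theorem leftCombinedHolomorph_eq_iff {α : Type*} (Q : LoopStr α)
    (hLB : Q.IsLeftBol)
    (A : Subgroup (Equiv.Perm α)) (hA : Q.IsAutSubgroup A) :
    (∀ p q : A × α, Q.leftComb A p q = Q.hstarL A p q) ↔
      (∀ φ ∈ A, ∀ a y : α,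
        Q.mul y (Q.mul (Q.ld y a) y) = Q.mul (φ y) (Q.mul (Q.ld (φ y) a) y)) := by
  simp only [LoopStr.leftComb_eq hLB hA, LoopStr.hstarL_eq hLB, Prod.mk.injEq, true_and]
  constructor
  · intro h φ hφ a y
    simpa [LoopStr.conjR] using (h (⟨φ, hφ⟩, a) (1, y)).symm
  · rintro h ⟨φ, x⟩ ⟨β, y⟩
    exact (h _ (β * φ * β⁻¹).2 _ y).symm
end
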